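/- arXiv:1508.02633 — 7 statements merged into one kernel-verified Lean document; each statement's English description precedes it below -/
import Mathlib

section
/- For the chemostat system with constant dilution D and μ the Haldane function, the Jacobian of the vector field at the equilibrium ξ_b(D) = (s_b(D), (s_in − s_b(D))/k), where s̄ < s_b(D) < s_in and μ(s_in) < D < μ(s̄), has one positive and one negative eigenvalue, so that ξ_b(D) is a saddle point. -/
/-- The Jacobian of the chemostat vector field at ξ_b(D) = (s_b(D), (s_in − s_b(D))/k)
has negative determinant, hence ξ_b(D) is a saddle point (one positive and one
negative eigenvalue). -/
theorem xi_b_saddle (μbar kS kI k sin D sb dμsb : ℝ) (hμbar : 0 < μbar)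
    (hkS : 0 < kS) (hkI : 0 < kI) (hk : 0 < k)
    (hsbar : Real.sqrt (kS * kI) < sin) (μ : ℝ → ℝ)
    (hμ : ∀ s : ℝ, μ s = μbar * s / (kS + s + s ^ 2 / kI))
    (hD1 : μ sin < D) (hD2 : D < μ (Real.sqrt (kS * kI)))
    (hsb1 : Real.sqrt (kS * kI) < sb) (hsb2 : sb < sin) (hroot : μ sb = D)
    (hdμ : HasDerivAt μ dμsb sb) (hdμneg : dμsb < 0) :
    (-D - k * dμsb * ((sin - sb) / k)) * (μ sb - D)
      - (-(k * μ sb)) * (dμsb * ((sin - sb) / k)) < 0 ∧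
    ∃ l1 l2 : ℝ, l1 < 0 ∧ 0 < l2 ∧
      l1 + l2 = (-D - k * dμsb * ((sin - sb) / k)) + (μ sb - D) ∧
      l1 * l2 = (-D - k * dμsb * ((sin - sb) / k)) * (μ sb - D)
        - (-(k * μ sb)) * (dμsb * ((sin - sb) / k)) := by
  have hsb0 : 0 < sb := lt_of_le_of_lt (Real.sqrt_nonneg _) hsb1
  have hden : 0 < kS + sb + sb ^ 2 / kI := by positivity
  have hD0 : 0 < D := by
    rw [← hroot, hμ sb]; positivity
  set T := (-D - k * dμsb * ((sin - sb) / k)) + (μ sb - D) with hT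
  set P := (-D - k * dμsb * ((sin - sb) / k)) * (μ sb - D)
      - (-(k * μ sb)) * (dμsb * ((sin - sb) / k)) with hP
  have hPval : P = D * (dμsb * (sin - sb)) := by
    rw [hP, hroot]
    field_simp
    ring
  have hPneg : P < 0 := by
    rw [hPval]
    have : dμsb * (sin - sb) < 0 := mul_neg_of_neg_of_pos hdμneg (by linarith)
    exact mul_neg_of_pos_of_neg hD0 this
  refine ⟨hPneg, ?_⟩
  have hdisc : T ^ 2 < T ^ 2 - 4 * P := by nlinarith
  set r := Real.sqrt (T ^ 2 - 4 * P) with hr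
  have hr0 : 0 ≤ r := Real.sqrt_nonneg _
  have hr2 : r ^ 2 = T ^ 2 - 4 * P := Real.sq_sqrt (by nlinarith)
  have habs : |T| < r := by
    have : |T| ^ 2 < r ^ 2 := by rw [hr2, sq_abs]; exact hdisc
    nlinarith [abs_nonneg T]
  clear_value r
  clear_value T P
  have hTr : T < r := lt_of_le_of_lt (le_abs_self T) habs
  have hTr' : -T < r := lt_of_le_of_lt (neg_le_abs T) habs
  refine ⟨(T - r) / 2, (T + r) / 2, by linarith, by linarith, by ring, ?_⟩
  have : (T - r) / 2 * ((T + r) / 2) = (T ^ 2 - r ^ 2) / 4 := by ring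
  rw [this, hr2]; ring
end

section
/- Define g_D(s) = (μ(s) − D)/(k μ'(s)) + D(s_in − s)/(k μ(s)) and h^a_D(s) = D(s_in − s_a(D))/(k μ(s)). Then for all s ∈ (0, s̄), g_D(s) ≥ h^a_D(s). -/
/-!
Write `μ(s) = μ̄ s / q(s)` with `q(s) = k_S + s + s²/k_I`. After multiplying by `k μ(s) μ'(s) > 0`
the claim becomes `D (s - s_a) μ'(s) ≤ (μ(s) - D) μ(s)`, and with `D = μ(s_a)` the difference of the
two sides is the square `k_S μ̄² (s - s_a)² / (q(s)² q(s_a))`.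
-/

noncomputable def haldane (μbar kS kI s : ℝ) : ℝ := μbar * s / (kS + s + s ^ 2 / kI)

section Haldane

variable {μbar kS kI : ℝ}

lemma haldane_denom_pos (hkS : 0 < kS) (hkI : 0 < kI) {s : ℝ} (hs : 0 ≤ s) :
    0 < kS + s + s ^ 2 / kI := by
  positivity

lemma haldane_pos (hμbar : 0 < μbar) (hkS : 0 < kS) (hkI : 0 < kI) {s : ℝ} (hs : 0 < s) :
    0 < haldane μbar kS kI s :=
  div_pos (mul_pos hμbar hs) (haldane_denom_pos hkS hkI hs.le)

lemma hasDerivAt_haldane {s : ℝ} (hq : kS + s + s ^ 2 / kI ≠ 0) :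
    HasDerivAt (haldane μbar kS kI)
      (μbar * (kS - s ^ 2 / kI) / (kS + s + s ^ 2 / kI) ^ 2) s := by
  have hden : HasDerivAt (fun x : ℝ => kS + x + x ^ 2 / kI) (1 + 2 * s / kI) s :=
    (((hasDerivAt_id' s).const_add kS).add ((hasDerivAt_pow 2 s).div_const kI)).congr_deriv
      (by push_cast; ring)
  refine (((hasDerivAt_id' s).const_mul μbar).div hden hq).congr_deriv ?_
  field_simp
  ring

lemma haldane_deriv_pos (hμbar : 0 < μbar) (hkS : 0 < kS) (hkI : 0 < kI) {s : ℝ} (hs : 0 < s)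
    (hs_lt : s < Real.sqrt (kS * kI)) :
    0 < μbar * (kS - s ^ 2 / kI) / (kS + s + s ^ 2 / kI) ^ 2 := by
  have hs_sq : s ^ 2 < kS * kI := (Real.lt_sqrt hs.le).mp hs_lt
  have hnum : 0 < kS - s ^ 2 / kI := by
    rw [sub_pos, div_lt_iff₀ hkI]
    linarith
  have := haldane_denom_pos hkS hkI hs.le
  positivity

lemma haldane_sub_mul_self_sub_eq {s a : ℝ} (hqs : kS + s + s ^ 2 / kI ≠ 0)
    (hqa : kS + a + a ^ 2 / kI ≠ 0) :
    (haldane μbar kS kI s - haldane μbar kS kI a) * haldane μbar kS kI s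
        - haldane μbar kS kI a * (s - a) * (μbar * (kS - s ^ 2 / kI) / (kS + s + s ^ 2 / kI) ^ 2)
      = kS * μbar ^ 2 * (s - a) ^ 2 / ((kS + s + s ^ 2 / kI) ^ 2 * (kS + a + a ^ 2 / kI)) := by
  unfold haldane
  field_simp
  ring

lemma haldane_mul_sub_mul_deriv_le (hkS : 0 < kS) (hkI : 0 < kI) {s a : ℝ} (hs : 0 ≤ s)
    (ha : 0 ≤ a) :
    haldane μbar kS kI a * (s - a) * (μbar * (kS - s ^ 2 / kI) / (kS + s + s ^ 2 / kI) ^ 2)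
      ≤ (haldane μbar kS kI s - haldane μbar kS kI a) * haldane μbar kS kI s := by
  have hqs := haldane_denom_pos hkS hkI hs
  have hqa := haldane_denom_pos hkS hkI ha
  rw [← sub_nonneg, haldane_sub_mul_self_sub_eq hqs.ne' hqa.ne']
  positivity

end Haldane

lemma div_add_div_ge_of_mul_le {k m dm D s sa sin : ℝ} (hk : 0 < k) (hm : 0 < m) (hdm : 0 < dm)
    (h : D * (s - sa) * dm ≤ (m - D) * m) :
    (m - D) / (k * dm) + D * (sin - s) / (k * m) ≥ D * (sin - sa) / (k * m) := by
  have hkey : D * (s - sa) / (k * m) ≤ (m - D) / (k * dm) := by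
    rw [div_le_div_iff₀ (by positivity) (by positivity)]
    nlinarith
  have hsplit : D * (sin - sa) / (k * m) = D * (sin - s) / (k * m) + D * (s - sa) / (k * m) := by
    rw [← add_div]
    ring_nf
  linarith

theorem nullcline_above_isoline_a_general (μbar kS kI k sin D sa : ℝ) (hμbar : 0 < μbar)
    (hkS : 0 < kS) (hkI : 0 < kI) (hk : 0 < k)
    (μ dμ : ℝ → ℝ)
    (hμ : ∀ s : ℝ, μ s = μbar * s / (kS + s + s ^ 2 / kI))
    (hdμ : ∀ s : ℝ, 0 < s → HasDerivAt μ (dμ s) s)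
    (hsa0 : 0 < sa) (hroot : μ sa = D) :
    ∀ s : ℝ, 0 < s → s < Real.sqrt (kS * kI) →
      (μ s - D) / (k * dμ s) + D * (sin - s) / (k * μ s)
        ≥ D * (sin - sa) / (k * μ s) := by
  intro s hs hs_lt
  obtain rfl : μ = haldane μbar kS kI := funext hμ
  subst hroot
  have hdμs : dμ s = μbar * (kS - s ^ 2 / kI) / (kS + s + s ^ 2 / kI) ^ 2 :=
    (hdμ s hs).unique (hasDerivAt_haldane (haldane_denom_pos hkS hkI hs.le).ne')
  rw [hdμs]
  exact div_add_div_ge_of_mul_le hk (haldane_pos hμbar hkS hkI hs)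
    (haldane_deriv_pos hμbar hkS hkI hs hs_lt) (haldane_mul_sub_mul_deriv_le hkS hkI hs.le hsa0.le)

/-- On (0, s̄), the nullcline ẏ = 0 is above the isoline y = y_a(D):
g_D(s) ≥ h^a_D(s). -/
theorem nullcline_above_isoline_a (μbar kS kI k sin D sa : ℝ) (hμbar : 0 < μbar)
    (hkS : 0 < kS) (hkI : 0 < kI) (hk : 0 < k) (hsin : 0 < sin)
    (μ dμ : ℝ → ℝ)
    (hμ : ∀ s : ℝ, μ s = μbar * s / (kS + s + s ^ 2 / kI))
    (hdμ : ∀ s : ℝ, 0 < s → HasDerivAt μ (dμ s) s)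
    (hD0 : 0 < D) (hD : D < μ (Real.sqrt (kS * kI)))
    (hsa0 : 0 < sa) (hsab : sa < Real.sqrt (kS * kI)) (hroot : μ sa = D) :
    ∀ s : ℝ, 0 < s → s < Real.sqrt (kS * kI) →
      (μ s - D) / (k * dμ s) + D * (sin - s) / (k * μ s)
        ≥ D * (sin - sa) / (k * μ s) :=
  nullcline_above_isoline_a_general μbar kS kI k sin D sa hμbar hkS hkI hk μ dμ hμ hdμ hsa0 hroot
end

section
/- Define g_D(s) = (μ(s) − D)/(k μ'(s)) + D(s_in − s)/(k μ(s)) and h^b_D(s) = D(s_in − s_b(D))/(k μ(s)). Then for all s ∈ (s̄, s_in), g_D(s) ≤ h^b_D(s). -/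
/-! With `q(s) = k_S + s + s²/k_I` and `D = μ(s_b)`, a direct computation gives
`μ(s) (μ(s) - D) - D (s - s_b) μ'(s) = μ̄² k_S (s - s_b)² / (q(s)² q(s_b)) ≥ 0`.
Since `μ'(s) < 0` beyond `s̄`, dividing by `k μ(s) μ'(s) < 0` yields
`(μ(s) - D) / (k μ'(s)) ≤ D (s - s_b) / (k μ(s))`, which is the claim after adding
`D (s_in - s) / (k μ(s))` to both sides. -/

noncomputable section

namespace Haldane

variable (μbar kS kI : ℝ)

def denom (s : ℝ) : ℝ := kS + s + s ^ 2 / kI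

def rate (s : ℝ) : ℝ := μbar * s / denom kS kI s

def rateDeriv (s : ℝ) : ℝ := μbar * (kS - s ^ 2 / kI) / denom kS kI s ^ 2

variable {μbar kS kI}

lemma denom_pos (hkS : 0 < kS) (hkI : 0 < kI) {s : ℝ} (hs : 0 < s) : 0 < denom kS kI s := by
  unfold denom; positivity

lemma rate_pos (hμbar : 0 < μbar) (hkS : 0 < kS) (hkI : 0 < kI) {s : ℝ} (hs : 0 < s) :
    0 < rate μbar kS kI s :=
  div_pos (mul_pos hμbar hs) (denom_pos hkS hkI hs)

lemma hasDerivAt_rate {s : ℝ} (hs : denom kS kI s ≠ 0) :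
    HasDerivAt (rate μbar kS kI) (rateDeriv μbar kS kI s) s := by
  have hden : HasDerivAt (denom kS kI) (1 + 2 * s / kI) s := by
    refine (((hasDerivAt_id s).const_add kS).add
      ((hasDerivAt_pow 2 s).div_const kI)).congr_deriv ?_
    simp only [Nat.cast_ofNat]
    ring
  refine (((hasDerivAt_id s).const_mul μbar).div hden hs).congr_deriv ?_
  simp only [rateDeriv, denom, id_eq] at hs ⊢
  field_simp
  ring

lemma rateDeriv_neg (hμbar : 0 < μbar) (hkI : 0 < kI) {s : ℝ} (hs : kS * kI < s ^ 2)
    (hden : denom kS kI s ≠ 0) : rateDeriv μbar kS kI s < 0 := by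
  have hnum : kS - s ^ 2 / kI < 0 := by
    rw [sub_neg, lt_div_iff₀ hkI]
    exact hs
  exact div_neg_of_neg_of_pos (mul_neg_of_pos_of_neg hμbar hnum) (by positivity)

lemma rate_mul_sub_sub_eq (hkI : kI ≠ 0) {s b : ℝ} (hs : denom kS kI s ≠ 0)
    (hb : denom kS kI b ≠ 0) :
    rate μbar kS kI s * (rate μbar kS kI s - rate μbar kS kI b)
        - rate μbar kS kI b * (s - b) * rateDeriv μbar kS kI s
      = μbar ^ 2 * kS * (s - b) ^ 2 / (denom kS kI s ^ 2 * denom kS kI b) := by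
  have hds : denom kS kI s * kI = kS * kI + s * kI + s ^ 2 := by unfold denom; field_simp
  have hdb : denom kS kI b * kI = kS * kI + b * kI + b ^ 2 := by unfold denom; field_simp
  simp only [rate, rateDeriv]
  generalize denom kS kI s = ds at *
  generalize denom kS kI b = db at *
  field_simp
  linear_combination μbar ^ 2 * s ^ 2 * hdb - μbar ^ 2 * s * b * hds

lemma rate_mul_sub_sub_nonneg (hkS : 0 < kS) (hkI : 0 < kI) {s b : ℝ} (hs : 0 < s)
    (hb : 0 < b) :
    0 ≤ rate μbar kS kI s * (rate μbar kS kI s - rate μbar kS kI b)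
        - rate μbar kS kI b * (s - b) * rateDeriv μbar kS kI s := by
  have hds := denom_pos hkS hkI hs
  have hdb := denom_pos hkS hkI hb
  rw [rate_mul_sub_sub_eq hkI.ne' hds.ne' hdb.ne']
  positivity

end Haldane

lemma sub_div_add_div_le_div {k m m' D s b c : ℝ} (hk : 0 < k) (hm : 0 < m) (hm' : m' < 0)
    (h : 0 ≤ m * (m - D) - D * (s - b) * m') :
    (m - D) / (k * m') + D * (c - s) / (k * m) ≤ D * (c - b) / (k * m) := by
  have hkm : 0 < k * m := mul_pos hk hm
  have hkm' : 0 < -(k * m') := neg_pos.mpr (mul_neg_of_pos_of_neg hk hm')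
  have hle : (m - D) / (k * m') ≤ D * (s - b) / (k * m) := by
    rw [← neg_div_neg_eq, div_le_div_iff₀ hkm' hkm]
    nlinarith [mul_nonneg hk.le h]
  calc (m - D) / (k * m') + D * (c - s) / (k * m)
      ≤ D * (s - b) / (k * m) + D * (c - s) / (k * m) := by gcongr
    _ = D * (c - b) / (k * m) := by rw [← add_div]; ring_nf

open Haldane in
theorem nullcline_below_isoline_b_general (μbar kS kI k sin D sb : ℝ) (hμbar : 0 < μbar)
    (hkS : 0 < kS) (hkI : 0 < kI) (hk : 0 < k)
    (μ dμ : ℝ → ℝ)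
    (hμ : ∀ s : ℝ, μ s = μbar * s / (kS + s + s ^ 2 / kI))
    (hdμ : ∀ s : ℝ, 0 < s → HasDerivAt μ (dμ s) s)
    (hsb1 : Real.sqrt (kS * kI) < sb) (hroot : μ sb = D) :
    ∀ s : ℝ, Real.sqrt (kS * kI) < s → s < sin →
      (μ s - D) / (k * dμ s) + D * (sin - s) / (k * μ s)
        ≤ D * (sin - sb) / (k * μ s) := by
  intro s hs _
  have hsbar : 0 < Real.sqrt (kS * kI) := Real.sqrt_pos.mpr (mul_pos hkS hkI)
  have hs0 : 0 < s := hsbar.trans hs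
  have hsb0 : 0 < sb := hsbar.trans hsb1
  obtain rfl : μ = rate μbar kS kI := funext hμ
  subst hroot
  have hden := denom_pos hkS hkI hs0
  have hdμs : dμ s = rateDeriv μbar kS kI s := (hdμ s hs0).unique (hasDerivAt_rate hden.ne')
  rw [hdμs]
  refine sub_div_add_div_le_div hk (rate_pos hμbar hkS hkI hs0)
    (rateDeriv_neg hμbar hkI ((Real.sqrt_lt' hs0).mp hs) hden.ne') ?_
  exact rate_mul_sub_sub_nonneg hkS hkI hs0 hsb0

/-- On (s̄, s_in), the nullcline ẏ = 0 is below the isoline y = y_b(D):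
g_D(s) ≤ h^b_D(s). -/
theorem nullcline_below_isoline_b (μbar kS kI k sin D sb : ℝ) (hμbar : 0 < μbar)
    (hkS : 0 < kS) (hkI : 0 < kI) (hk : 0 < k)
    (hsbar : Real.sqrt (kS * kI) < sin)
    (μ dμ : ℝ → ℝ)
    (hμ : ∀ s : ℝ, μ s = μbar * s / (kS + s + s ^ 2 / kI))
    (hdμ : ∀ s : ℝ, 0 < s → HasDerivAt μ (dμ s) s)
    (hD0 : 0 < D) (hD : D < μ (Real.sqrt (kS * kI)))
    (hsb1 : Real.sqrt (kS * kI) < sb) (hroot : μ sb = D) :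
    ∀ s : ℝ, Real.sqrt (kS * kI) < s → s < sin →
      (μ s - D) / (k * dμ s) + D * (sin - s) / (k * μ s)
        ≤ D * (sin - sb) / (k * μ s) :=
  nullcline_below_isoline_b_general μbar kS kI k sin D sb hμbar hkS hkI hk μ dμ hμ hdμ hsb1 hroot

end
end

section
/- The equation φ^b_D(s) = 0, where φ^b_D(s) = D(s_b(D) − s)/(k μ(s)) + (μ(s) − D)/(k μ'(s)) and μ is the Haldane function, is equivalent on (s̄, ∞) \ {points where μ' = 0} to the quadratic equation (s_a(D)/k_I) s² − 2 k_S s + k_S s_b(D) = 0, which (using s_a(D) s_b(D) = k_S k_I) has the double root s = s_b(D). -/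
set_option maxHeartbeats 1000000


/-- On (s̄,∞) (away from zeros of μ'), φ^b_D(s) = 0 is equivalent to the quadratic
(s_a/k_I)s² − 2k_S s + k_S s_b = 0, which (using s_a s_b = k_S k_I) has the double
root s = s_b. -/
theorem phi_b_quadratic (μbar kS kI k D sa sb : ℝ) (hμbar : 0 < μbar)
    (hkS : 0 < kS) (hkI : 0 < kI) (hk : 0 < k)
    (μ dμ : ℝ → ℝ)
    (hμ : ∀ s : ℝ, μ s = μbar * s / (kS + s + s ^ 2 / kI))
    (hdμ : ∀ s : ℝ, dμ s = μbar * (kS - s ^ 2 / kI) / (kS + s + s ^ 2 / kI) ^ 2)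
    (hD0 : 0 < D) (hD : D < μ (Real.sqrt (kS * kI)))
    (hsa0 : 0 < sa) (hsab : sa < Real.sqrt (kS * kI))
    (hsbb : Real.sqrt (kS * kI) < sb)
    (hra : μ sa = D) (hrb : μ sb = D)
    (hprod : sa * sb = kS * kI) :
    (∀ s : ℝ, Real.sqrt (kS * kI) < s → dμ s ≠ 0 →
      (D * (sb - s) / (k * μ s) + (μ s - D) / (k * dμ s) = 0 ↔
        sa / kI * s ^ 2 - 2 * kS * s + kS * sb = 0)) ∧
    (∀ s : ℝ, sa / kI * s ^ 2 - 2 * kS * s + kS * sb = 0 ↔ s = sb) := by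
  have hsqrt : 0 < Real.sqrt (kS * kI) := Real.sqrt_pos.2 (by positivity)
  have hsb0 : 0 < sb := hsqrt.trans hsbb
  have hsa' : sa = kS * kI / sb := by
    field_simp
    linarith [hprod]
  have hqb : 0 < kS + sb + sb ^ 2 / kI := by positivity
  have key2 : ∀ s : ℝ, sa / kI * s ^ 2 - 2 * kS * s + kS * sb = 0 ↔ s = sb := by
    intro s
    have hfac : sa / kI * s ^ 2 - 2 * kS * s + kS * sb = kS / sb * (s - sb) ^ 2 := by
      rw [hsa']; field_simp; ring
    rw [hfac, mul_eq_zero]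
    constructor
    · rintro (h | h)
      · exact absurd h (div_ne_zero hkS.ne' hsb0.ne')
      · have := pow_eq_zero_iff (n := 2) (by norm_num) |>.mp h
        linarith [this]
    · intro h; right; rw [h]; ring
  refine ⟨fun s hs hd => ?_, key2⟩
  have hs0 : 0 < s := hsqrt.trans hs
  have hs2 : kS * kI < s ^ 2 := by
    have := (Real.sqrt_lt' hs0).mp hs
    linarith
  have hc : kS - s ^ 2 / kI < 0 := by
    rw [sub_neg]
    rw [lt_div_iff₀ hkI]
    linarith
  have hq : 0 < kS + s + s ^ 2 / kI := by positivity
  have hDval : D = μbar * sb / (kS + sb + sb ^ 2 / kI) := by rw [← hrb, hμ]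
  have hφ : D * (sb - s) / (k * μ s) + (μ s - D) / (k * dμ s)
      = kS * (sb - s) ^ 2 * (kS + s + s ^ 2 / kI) /
        ((kS + sb + sb ^ 2 / kI) * k * s * (kS - s ^ 2 / kI)) := by
    rw [hμ, hdμ, hDval]
    rw [div_add_div _ _ (by positivity) (mul_ne_zero hk.ne' (div_ne_zero (mul_ne_zero hμbar.ne' hc.ne) (by positivity))), div_eq_div_iff (by
      exact mul_ne_zero (by positivity) (mul_ne_zero hk.ne' (div_ne_zero (mul_ne_zero hμbar.ne' hc.ne) (by positivity)))) (by
      exact mul_ne_zero (mul_ne_zero (mul_ne_zero hqb.ne' hk.ne') hs0.ne') hc.ne)]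
    field_simp
    ring
  rw [hφ, key2, div_eq_zero_iff]
  have hden : (kS + sb + sb ^ 2 / kI) * k * s * (kS - s ^ 2 / kI) ≠ 0 := by
    apply mul_ne_zero
    apply mul_ne_zero
    apply mul_ne_zero hqb.ne' hk.ne'
    exact hs0.ne'
    exact hc.ne
  constructor
  · rintro (h | h)
    · rcases mul_eq_zero.mp h with h' | h'
      · rcases mul_eq_zero.mp h' with h'' | h''
        · exact absurd h'' hkS.ne'
        · have := pow_eq_zero_iff (n := 2) (by norm_num) |>.mp h''
          linarith
      · exact absurd h' hq.ne'
    · exact absurd h hden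
  · intro h; left; rw [h]; ring
end

section
/- Let y(ξ) = α μ(s) x and let D be a constant dilution with μ(s_in) < D < μ(s̄). Along a trajectory of the chemostat system, the time derivative of y satisfies ẏ(ξ) > 0 at every point ξ = (s,x) in the open positive orthant with y_b(D) < y(ξ) < y_a(D), where y_j(D) = (αD/k)(s_in − s_j(D)) for j = a, b. -/
lemma key_pos (D sa sb sin s w : ℝ) (hD : 0 < D) (hsa : 0 < sa) (hab : sa < sb) (hs : 0 < s)
    (h1 : D * (sin - sb) < w) (h2 : w < D * (sin - sa)) :
    0 < (sa * sb - s ^ 2) * (D * (sin - s) - w) - D * s * (s - sa) * (s - sb) := by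
  have hsb : 0 < sb := hsa.trans hab
  rcases lt_trichotomy (s ^ 2) (sa * sb) with h | h | h
  · nlinarith [mul_pos (sub_pos.mpr h) (sub_pos.mpr h2),
      mul_nonneg (mul_nonneg hD.le hsb.le) (sq_nonneg (sa - s))]
  · have h1' : sa < s := by nlinarith
    have h2' : s < sb := by nlinarith
    have e1 : (sa * sb - s ^ 2) * (D * (sin - s) - w) = 0 := by rw [h]; ring
    nlinarith [e1, mul_pos (mul_pos (mul_pos hD hs) (sub_pos.mpr h1')) (sub_pos.mpr h2')]
  · nlinarith [mul_pos (sub_pos.mpr h) (sub_pos.mpr h1),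
      mul_nonneg (mul_nonneg hD.le hsa.le) (sq_nonneg (sb - s))]

/-- Under constant dilution μ(s_in) < D < μ(s̄), the derivative of y = αμ(s)x along
trajectories is strictly positive at every point of the open positive orthant with
y_b(D) < y < y_a(D). -/
theorem ydot_positive (μbar kS kI k sin α D sa sb : ℝ) (hμbar : 0 < μbar)
    (hkS : 0 < kS) (hkI : 0 < kI) (hk : 0 < k) (hα : 0 < α)
    (hsbar : Real.sqrt (kS * kI) < sin)
    (μ dμ : ℝ → ℝ)
    (hμ : ∀ s : ℝ, μ s = μbar * s / (kS + s + s ^ 2 / kI))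
    (hdμ : ∀ s : ℝ, 0 < s → HasDerivAt μ (dμ s) s)
    (hD1 : μ sin < D) (hD2 : D < μ (Real.sqrt (kS * kI)))
    (hsa0 : 0 < sa) (hsab : sa < Real.sqrt (kS * kI))
    (hsbb : Real.sqrt (kS * kI) < sb)
    (hra : μ sa = D) (hrb : μ sb = D) :
    ∀ s x : ℝ, 0 < s → 0 < x →
      α * D / k * (sin - sb) < α * μ s * x →
      α * μ s * x < α * D / k * (sin - sa) →
      α * (D * (sin - s) - k * μ s * x) * dμ s * x
        + α * μ s * (μ s - D) * x > 0 := by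
  have hkk : 0 < kS * kI := mul_pos hkS hkI
  have hsbarpos : 0 < Real.sqrt (kS * kI) := Real.sqrt_pos.mpr hkk
  have hsb0 : 0 < sb := hsbarpos.trans hsbb
  have hsin0 : 0 < sin := hsbarpos.trans hsbar
  have hQ : ∀ t : ℝ, 0 < t → 0 < kS + t + t ^ 2 / kI := by
    intro t ht
    have : 0 ≤ t ^ 2 / kI := div_nonneg (sq_nonneg t) hkI.le
    linarith
  have hD0 : 0 < D := by
    have := hQ sin hsin0
    have h1 : 0 < μ sin := by
      rw [hμ sin]; exact div_pos (mul_pos hμbar hsin0) this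
    linarith
  -- clear denominators in μ sa = D, μ sb = D
  have h6a : sa ^ 2 / kI * kI = sa ^ 2 := div_mul_cancel₀ _ (ne_of_gt hkI)
  have h6b : sb ^ 2 / kI * kI = sb ^ 2 := div_mul_cancel₀ _ (ne_of_gt hkI)
  have e_a : μbar * sa * kI = D * (kS * kI + sa * kI + sa ^ 2) := by
    have e := hra
    rw [hμ sa, div_eq_iff (ne_of_gt (hQ sa hsa0))] at e
    linear_combination kI * e + D * h6a
  have e_b : μbar * sb * kI = D * (kS * kI + sb * kI + sb ^ 2) := by
    have e := hrb
    rw [hμ sb, div_eq_iff (ne_of_gt (hQ sb hsb0))] at e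
    linear_combination kI * e + D * h6b
  have hab : sa < sb := hsab.trans hsbb
  have hprod : sa * sb = kS * kI := by
    have key : D * ((sb - sa) * (kS * kI - sa * sb)) = 0 := by
      linear_combination sa * e_b - sb * e_a
    rcases mul_eq_zero.mp key with h | h
    · exact absurd h (ne_of_gt hD0)
    · rcases mul_eq_zero.mp h with h' | h'
      · exact absurd h' (sub_ne_zero.mpr (ne_of_gt hab))
      · linarith
  have hmkI : μbar * kI = D * (kI + sa + sb) := by
    have h5 : sa * (μbar * kI) = sa * (D * (kI + sa + sb)) := by
      linear_combination e_a - D * hprod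
    exact mul_left_cancel₀ (ne_of_gt hsa0) h5
  intro s x hs hx h3 h4
  have hQ0 : 0 < kS + s + s ^ 2 / kI := hQ s hs
  -- derivative value
  have hμfun : μ = fun t => μbar * t / (kS + t + t ^ 2 / kI) := funext hμ
  have hden : HasDerivAt (fun t : ℝ => kS + t + t ^ 2 / kI)
      (0 + 1 + (↑(2 : ℕ) * s ^ (2 - 1)) / kI) s :=
    (((hasDerivAt_const s kS).add (hasDerivAt_id s)).add ((hasDerivAt_pow 2 s).div_const kI))
  have hnum : HasDerivAt (fun t : ℝ => μbar * t) (μbar * 1) s := by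
    simpa using (hasDerivAt_id s).const_mul μbar
  have hdiv := hnum.div hden (ne_of_gt hQ0)
  have hd2 : HasDerivAt μ
      ((μbar * 1 * (kS + s + s ^ 2 / kI) - μbar * s * (0 + 1 + (↑(2 : ℕ) * s ^ (2 - 1)) / kI)) /
        (kS + s + s ^ 2 / kI) ^ 2) s := by
    rw [hμfun]; exact hdiv
  have hdval := (hdμ s hs).unique hd2
  set Q' : ℝ := kS * kI + s * kI + s ^ 2 with hQ'def
  have hQ'pos : 0 < Q' := by
    have : 0 ≤ s ^ 2 := sq_nonneg s
    have := mul_pos hs hkI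
    simp only [hQ'def]
    nlinarith
  have hEQ : dμ s * Q' ^ 2 = μbar * (kS * kI - s ^ 2) * kI := by
    rw [hdval, hQ'def]
    have hkI' : kI ≠ 0 := ne_of_gt hkI
    have hQ0' : kS + s + s ^ 2 / kI ≠ 0 := ne_of_gt hQ0
    field_simp
    ring
  have hmQ : μ s * Q' = μbar * s * kI := by
    rw [hμ s, hQ'def]
    have hkI' : kI ≠ 0 := ne_of_gt hkI
    have hQ0' : kS + s + s ^ 2 / kI ≠ 0 := ne_of_gt hQ0
    field_simp
  have hsub : (μ s - D) * Q' = -(D * (s - sa) * (s - sb)) := by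
    linear_combination hmQ + s * hmkI + D * hprod
  -- bounds on w = k * μ s * x
  rw [div_mul_eq_mul_div, div_lt_iff₀ hk] at h3
  rw [div_mul_eq_mul_div, lt_div_iff₀ hk] at h4
  have hw1 : D * (sin - sb) < k * μ s * x := by
    refine lt_of_mul_lt_mul_left ?_ hα.le
    calc α * (D * (sin - sb)) = α * D * (sin - sb) := by ring
      _ < α * μ s * x * k := h3
      _ = α * (k * μ s * x) := by ring
  have hw2 : k * μ s * x < D * (sin - sa) := by
    refine lt_of_mul_lt_mul_left ?_ hα.le
    calc α * (k * μ s * x) = α * μ s * x * k := by ring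
      _ < α * D * (sin - sa) := h4
      _ = α * (D * (sin - sa)) := by ring
  have hGpos := key_pos D sa sb sin s (k * μ s * x) hD0 hsa0 hab hs hw1 hw2
  have hGeq : ((D * (sin - s) - k * μ s * x) * dμ s + μ s * (μ s - D)) * (kI * Q' ^ 2)
      = μbar * kI ^ 2 *
        ((sa * sb - s ^ 2) * (D * (sin - s) - k * μ s * x) - D * s * (s - sa) * (s - sb)) := by
    linear_combination (kI * (D * (sin - s) - k * μ s * x)) * hEQ
      - (kI * (D * (sin - s) - k * μ s * x) * μbar * kI) * hprod
      + (kI * ((μ s - D) * Q')) * hmQ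
      + (kI * (μbar * s * kI)) * hsub
  have hinner : 0 < (D * (sin - s) - k * μ s * x) * dμ s + μ s * (μ s - D) := by
    have hmul : 0 < kI * Q' ^ 2 := by positivity
    have h2 : 0 < ((D * (sin - s) - k * μ s * x) * dμ s + μ s * (μ s - D)) * (kI * Q' ^ 2) := by
      rw [hGeq]
      exact mul_pos (by positivity) hGpos
    rcases mul_pos_iff.mp h2 with ⟨ha, _⟩ | ⟨_, hc⟩
    · exact ha
    · linarith
  have hfin : α * (D * (sin - s) - k * μ s * x) * dμ s * x + α * μ s * (μ s - D) * x
      = α * x * ((D * (sin - s) - k * μ s * x) * dμ s + μ s * (μ s - D)) := by ring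
  rw [gt_iff_lt, hfin]
  exact mul_pos (mul_pos hα hx) hinner
end

section
/- The steady-state productivity function φ(s) = (α/k) μ(s)(s_in − s), with μ Haldane, attains its maximum on [0, s_in] at s^◇ = s_in / (1 + √(1 + (s_in/k_S)(1 + s_in/k_I))), and s^◇ < s̄ = √(k_S k_I). -/
/-!
Up to the positive factor `α μ̄ k_I / k`, `φ(s) = s (s_in - s) / Q(s)` with
`Q(s) = k_S k_I + k_I s + s²`. The point `a = s^◇` is the positive root of the critical-point
equation `(k_I + s_in) a² + 2 k_S k_I a = k_S k_I s_in`, and for such `a` the cross-multiplied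
difference is a perfect square:
`a (s_in - a) Q(s) - s (s_in - s) Q(a) = (a (s_in - a) + Q(a)) (s - a)²`.
The same equation gives `a < s̄`: if `a² ≥ k_S k_I`, its left side would exceed its right side.
-/

noncomputable def optimalSubstrate (kS kI sin : ℝ) : ℝ :=
  sin / (1 + √(1 + sin / kS * (1 + sin / kI)))

section OptimalSubstrate

variable {kS kI sin : ℝ}

lemma one_lt_sqrt_productivity_discr (hkS : 0 < kS) (hkI : 0 < kI) (hsin : 0 < sin) :
    1 < √(1 + sin / kS * (1 + sin / kI)) := by
  rw [Real.lt_sqrt zero_le_one]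
  have : 0 < sin / kS * (1 + sin / kI) := by positivity
  linarith

lemma optimalSubstrate_pos (hkS : 0 < kS) (hkI : 0 < kI) (hsin : 0 < sin) :
    0 < optimalSubstrate kS kI sin := by
  unfold optimalSubstrate
  positivity

lemma optimalSubstrate_lt (hkS : 0 < kS) (hkI : 0 < kI) (hsin : 0 < sin) :
    optimalSubstrate kS kI sin < sin := by
  have hD := one_lt_sqrt_productivity_discr hkS hkI hsin
  rw [optimalSubstrate, div_lt_iff₀ (by positivity)]
  nlinarith

lemma optimalSubstrate_critical (hkS : 0 < kS) (hkI : 0 < kI) (hsin : 0 ≤ sin) :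
    (kI + sin) * optimalSubstrate kS kI sin ^ 2 + 2 * kS * kI * optimalSubstrate kS kI sin
      = kS * kI * sin := by
  set D := √(1 + sin / kS * (1 + sin / kI)) with hD
  have hD0 : 0 ≤ D := Real.sqrt_nonneg _
  have hD2 : kS * kI * (D ^ 2 - 1) = sin * (kI + sin) := by
    rw [hD, Real.sq_sqrt (by positivity)]
    field_simp
    ring
  rw [optimalSubstrate, ← hD]
  field_simp
  linear_combination -sin * hD2

end OptimalSubstrate

section CriticalPoint

variable {kS kI sin a : ℝ}

lemma lt_sqrt_of_critical (hkS : 0 < kS) (hkI : 0 < kI) (hsin : 0 < sin) (ha : 0 < a)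
    (hcrit : (kI + sin) * a ^ 2 + 2 * kS * kI * a = kS * kI * sin) :
    a < √(kS * kI) := by
  rw [Real.lt_sqrt ha.le]
  by_contra! h
  nlinarith [mul_le_mul_of_nonneg_left h (by positivity : (0 : ℝ) ≤ kI + sin),
    mul_pos (mul_pos hkS hkI) ha, mul_pos (mul_pos hkS hkI) hkI]

lemma div_le_div_of_critical (hkS : 0 < kS) (hkI : 0 < kI) (ha0 : 0 ≤ a) (has : a ≤ sin)
    (hcrit : (kI + sin) * a ^ 2 + 2 * kS * kI * a = kS * kI * sin) {s : ℝ} (hs : 0 ≤ s) :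
    s * (sin - s) / (kS * kI + kI * s + s ^ 2)
      ≤ a * (sin - a) / (kS * kI + kI * a + a ^ 2) := by
  have hQa : 0 < kS * kI + kI * a + a ^ 2 := by positivity
  have hsquare : a * (sin - a) * (kS * kI + kI * s + s ^ 2)
      - s * (sin - s) * (kS * kI + kI * a + a ^ 2)
      = (a * (sin - a) + (kS * kI + kI * a + a ^ 2)) * (s - a) ^ 2 := by
    linear_combination (s - a) * hcrit
  rw [div_le_div_iff₀ (by positivity) hQa]
  have : 0 ≤ a * (sin - a) := mul_nonneg ha0 (by linarith)
  nlinarith [mul_nonneg (add_nonneg this hQa.le) (sq_nonneg (s - a))]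

end CriticalPoint

lemma productivity_eq_mul_div {μbar kS kI α k sin t : ℝ} (hkS : 0 < kS) (hkI : 0 < kI)
    (ht : 0 ≤ t) :
    α / k * (μbar * t / (kS + t + t ^ 2 / kI)) * (sin - t)
      = α * μbar * kI / k * (t * (sin - t) / (kS * kI + kI * t + t ^ 2)) := by
  have : 0 < kS + t + t ^ 2 / kI := by positivity
  have : 0 < kS * kI + kI * t + t ^ 2 := by positivity
  field_simp

/-- The steady-state productivity φ(s) = (α/k) μ(s)(s_in − s) attains its maximum on
[0, s_in] at s^◇ = s_in/(1 + √(1 + (s_in/k_S)(1 + s_in/k_I))), and s^◇ < s̄. -/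
theorem productivity_max (μbar kS kI α k sin : ℝ) (hμbar : 0 < μbar)
    (hkS : 0 < kS) (hkI : 0 < kI) (hα : 0 < α) (hk : 0 < k)
    (hsbar : Real.sqrt (kS * kI) < sin)
    (μ : ℝ → ℝ)
    (hμ : ∀ s : ℝ, μ s = μbar * s / (kS + s + s ^ 2 / kI)) :
    (∀ s ∈ Set.Icc (0 : ℝ) sin,
      α / k * μ s * (sin - s)
        ≤ α / k * μ (sin / (1 + Real.sqrt (1 + sin / kS * (1 + sin / kI))))
            * (sin - sin / (1 + Real.sqrt (1 + sin / kS * (1 + sin / kI))))) ∧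
    sin / (1 + Real.sqrt (1 + sin / kS * (1 + sin / kI))) < Real.sqrt (kS * kI) := by
  have hsin : 0 < sin := (Real.sqrt_nonneg _).trans_lt hsbar
  have ha0 := optimalSubstrate_pos hkS hkI hsin
  have hcrit := optimalSubstrate_critical hkS hkI hsin.le
  refine ⟨fun s hs => ?_, lt_sqrt_of_critical hkS hkI hsin ha0 hcrit⟩
  change _ ≤ α / k * μ (optimalSubstrate kS kI sin) * (sin - optimalSubstrate kS kI sin)
  rw [hμ, hμ, productivity_eq_mul_div hkS hkI hs.1, productivity_eq_mul_div hkS hkI ha0.le]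
  exact mul_le_mul_of_nonneg_left
    (div_le_div_of_critical hkS hkI ha0.le (optimalSubstrate_lt hkS hkI hsin).le hcrit hs.1)
    (by positivity)
end

section
/- Suppose ȳ_i < ō_i < φ(s^◇), and define ō_D := min(μ(s^◇), μ(s_d(ȳ_i))) and ū_D := μ(s_c(ō_i)). If D ∈ (ū_D, ō_D), then y_b(D) < ȳ_i and y_a(D) > ō_i, where y_j(D) = (αD/k)(s_in − s_j(D)). -/
/-!
Write μ(s) = μ̄ s / q(s) with q(s) = k_S + s + s²/k_I. Then φ = (α μ̄ / k) ψ, where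
ψ(s) = s (s_in − s) / q(s) is `Haldane.yield`, and a direct computation gives
ψ(v) − ψ(u) = (v − u) G(u, v) / (q(u) q(v)) for the factor
G(u, v) = k_S s_in − k_S (u + v) − u v (1 + s_in/k_I) (`Haldane.secantFactor`), which is strictly
decreasing in each positive variable. As s^◇ maximizes ψ, this gives ψ(u) < ψ(v) for
0 < u < v < s^◇ and ψ(v) < ψ(u) for s^◇ < u < v. The roots of μ = D satisfy s_c < s_a < s^◇ and
s_d < s_b, and y_j(D) = φ(s_j(D)), so y_a(D) > φ(s_c) = ō_i and y_b(D) < φ(s_d) = ȳ_i.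
-/

namespace Haldane

noncomputable def yield (kS kI sin s : ℝ) : ℝ :=
  s * (sin - s) / (kS + s + s ^ 2 / kI)

noncomputable def secantFactor (kS kI sin u v : ℝ) : ℝ :=
  kS * sin - kS * (u + v) - u * v * (1 + sin / kI)

variable {kS kI sin u v w : ℝ}

lemma secantFactor_comm : secantFactor kS kI sin u v = secantFactor kS kI sin v u := by
  unfold secantFactor; ring

lemma secantFactor_lt_secantFactor (hkS : 0 < kS) (hsin : 0 < 1 + sin / kI) (hu : 0 < u)
    (hwv : w < v) : secantFactor kS kI sin u v < secantFactor kS kI sin u w := by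
  unfold secantFactor
  nlinarith [mul_pos hkS (sub_pos.mpr hwv), mul_pos (mul_pos hu (sub_pos.mpr hwv)) hsin]

lemma yield_sub_yield (hkI : kI ≠ 0) (hu : kS + u + u ^ 2 / kI ≠ 0)
    (hv : kS + v + v ^ 2 / kI ≠ 0) :
    yield kS kI sin v - yield kS kI sin u
      = (v - u) * secantFactor kS kI sin u v
        / ((kS + u + u ^ 2 / kI) * (kS + v + v ^ 2 / kI)) := by
  unfold yield secantFactor
  rw [div_sub_div _ _ hv hu, div_eq_div_iff (mul_ne_zero hv hu) (mul_ne_zero hu hv)]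
  field_simp
  ring

lemma sub_yield_pos_iff (hkS : 0 < kS) (hkI : 0 < kI) (hu : 0 ≤ u) (huv : u < v) :
    0 < yield kS kI sin v - yield kS kI sin u ↔ 0 < secantFactor kS kI sin u v := by
  have hv : 0 ≤ v := hu.trans huv.le
  have hqu : 0 < kS + u + u ^ 2 / kI := by positivity
  have hqv : 0 < kS + v + v ^ 2 / kI := by positivity
  rw [yield_sub_yield hkI.ne' hqu.ne' hqv.ne', div_pos_iff_of_pos_right (mul_pos hqu hqv),
    mul_pos_iff_of_pos_left (sub_pos.mpr huv)]

lemma sub_yield_nonneg_iff (hkS : 0 < kS) (hkI : 0 < kI) (hu : 0 ≤ u) (huv : u < v) :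
    0 ≤ yield kS kI sin v - yield kS kI sin u ↔ 0 ≤ secantFactor kS kI sin u v := by
  have hv : 0 ≤ v := hu.trans huv.le
  have hqu : 0 < kS + u + u ^ 2 / kI := by positivity
  have hqv : 0 < kS + v + v ^ 2 / kI := by positivity
  rw [yield_sub_yield hkI.ne' hqu.ne' hqv.ne', le_div_iff₀ (mul_pos hqu hqv), zero_mul,
    mul_nonneg_iff_of_pos_left (sub_pos.mpr huv)]

lemma yield_lt_of_yield_le_right (hkS : 0 < kS) (hkI : 0 < kI) (hsin : 0 ≤ sin) (hu : 0 < u)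
    (huv : u < v) (hvw : v < w) (h : yield kS kI sin u ≤ yield kS kI sin w) :
    yield kS kI sin u < yield kS kI sin v := by
  have hGw : 0 ≤ secantFactor kS kI sin u w :=
    (sub_yield_nonneg_iff hkS hkI hu.le (huv.trans hvw)).mp (sub_nonneg.mpr h)
  have hGv : 0 < secantFactor kS kI sin u v :=
    hGw.trans_lt (secantFactor_lt_secantFactor hkS (by positivity) hu hvw)
  exact sub_pos.mp ((sub_yield_pos_iff hkS hkI hu.le huv).mpr hGv)

lemma yield_lt_of_yield_le_left (hkS : 0 < kS) (hkI : 0 < kI) (hsin : 0 ≤ sin) (hw : 0 < w)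
    (hwu : w < u) (huv : u < v) (h : yield kS kI sin u ≤ yield kS kI sin w) :
    yield kS kI sin v < yield kS kI sin u := by
  have hGw : secantFactor kS kI sin u w ≤ 0 := by
    rw [secantFactor_comm]
    by_contra! hpos
    exact (sub_pos.mp ((sub_yield_pos_iff hkS hkI hw.le hwu).mpr hpos)).not_ge h
  have hGv : secantFactor kS kI sin u v < 0 :=
    (secantFactor_lt_secantFactor hkS (by positivity) (hw.trans hwu) (hwu.trans huv)).trans_le hGw
  by_contra! hle
  have := (sub_yield_nonneg_iff hkS hkI (hw.trans hwu).le huv).mp (sub_nonneg.mpr hle)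
  linarith

end Haldane

theorem admissible_dilution_general (μbar kS kI α k sin D ylo yhi sdia sc sd sa sb : ℝ)
    (hμbar : 0 < μbar) (hkS : 0 < kS) (hkI : 0 < kI) (hα : 0 < α) (hk : 0 < k)
    (hsbar : Real.sqrt (kS * kI) < sin)
    (μ : ℝ → ℝ)
    (hμ : ∀ s : ℝ, μ s = μbar * s / (kS + s + s ^ 2 / kI))
    -- s^◇ is the maximizer of φ(s) = (α/k)μ(s)(s_in − s) on [0, s_in], with s^◇ < s̄
    (hsdia1 : 0 < sdia) (hsdia2 : sdia < Real.sqrt (kS * kI))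
    (hsdiamax : ∀ s ∈ Set.Icc (0 : ℝ) sin,
      α / k * μ s * (sin - s) ≤ α / k * μ sdia * (sin - sdia))
    -- s_c(ō_i) and s_d(ȳ_i): roots of φ(s) = ō_i and φ(s) = ȳ_i
    (hsc1 : 0 < sc) (hsc2 : sc < sdia) (hsc : α / k * μ sc * (sin - sc) = yhi)
    (hsd1 : sdia < sd) (hsd2 : sd < sin) (hsd : α / k * μ sd * (sin - sd) = ylo)
    -- μ increasing on [0, s̄], decreasing on [s̄, ∞)
    (hmono : StrictMonoOn μ (Set.Icc 0 (Real.sqrt (kS * kI))))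
    (hanti : StrictAntiOn μ (Set.Ici (Real.sqrt (kS * kI))))
    -- s_a(D) < s̄ < s_b(D): the roots of μ(s) = D
    (hsa1 : 0 < sa) (hsa2 : sa < Real.sqrt (kS * kI)) (hra : μ sa = D)
    (hsb1 : Real.sqrt (kS * kI) < sb) (hrb : μ sb = D)
    -- D in the admissible interval
    (hD1 : μ sc < D) (hD2 : D < min (μ sdia) (μ sd)) :
    α * D / k * (sin - sb) < ylo ∧ α * D / k * (sin - sa) > yhi := by
  open Haldane in
  have hsbar0 : 0 < Real.sqrt (kS * kI) := Real.sqrt_pos.mpr (mul_pos hkS hkI)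
  have hsin : 0 ≤ sin := (hsbar0.trans hsbar).le
  have hc : 0 < α * μbar / k := by positivity
  have hφ : ∀ s, α / k * μ s * (sin - s) = α * μbar / k * yield kS kI sin s := by
    intro s; rw [hμ, yield]; ring
  have hyD : ∀ s, μ s = D → α * D / k * (sin - s) = α * μbar / k * yield kS kI sin s := by
    intro s hs; rw [← hφ, hs]; ring
  have hmax : ∀ s ∈ Set.Icc 0 sin, yield kS kI sin s ≤ yield kS kI sin sdia := fun s hs =>
    le_of_mul_le_mul_left (by simpa only [hφ] using hsdiamax s hs) hc
  have hscI : sc ∈ Set.Icc 0 (Real.sqrt (kS * kI)) := ⟨hsc1.le, (hsc2.trans hsdia2).le⟩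
  have hsaI : sa ∈ Set.Icc 0 (Real.sqrt (kS * kI)) := ⟨hsa1.le, hsa2.le⟩
  have hsdiaI : sdia ∈ Set.Icc 0 (Real.sqrt (kS * kI)) := ⟨hsdia1.le, hsdia2.le⟩
  have hsc_sa : sc < sa := (hmono.lt_iff_lt hscI hsaI).mp (hra ▸ hD1)
  have hsa_sdia : sa < sdia :=
    (hmono.lt_iff_lt hsaI hsdiaI).mp (hra ▸ hD2.trans_le (min_le_left _ _))
  have hsd_sb : sd < sb := by
    rcases lt_or_ge sd (Real.sqrt (kS * kI)) with h | h
    · exact h.trans hsb1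
    · exact (hanti.lt_iff_gt hsb1.le h).mp (hrb ▸ hD2.trans_le (min_le_right _ _))
  constructor
  · rw [hyD sb hrb, ← hsd, hφ]
    refine mul_lt_mul_of_pos_left ?_ hc
    exact yield_lt_of_yield_le_left hkS hkI hsin hsdia1 hsd1 hsd_sb
      (hmax sd ⟨(hsdia1.trans hsd1).le, hsd2.le⟩)
  · rw [hyD sa hra, ← hsc, hφ]
    refine mul_lt_mul_of_pos_left ?_ hc
    exact yield_lt_of_yield_le_right hkS hkI hsin hsc1 hsc_sa hsa_sdia
      (hmax sc ⟨hsc1.le, (hsc2.trans (hsdia2.trans hsbar)).le⟩)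

/-- If D lies in the admissible interval (μ(s_c(ō_i)), min(μ(s^◇), μ(s_d(ȳ_i)))),
then y_b(D) < ȳ_i and y_a(D) > ō_i. -/
theorem admissible_dilution (μbar kS kI α k sin D ylo yhi sdia sc sd sa sb : ℝ)
    (hμbar : 0 < μbar) (hkS : 0 < kS) (hkI : 0 < kI) (hα : 0 < α) (hk : 0 < k)
    (hsbar : Real.sqrt (kS * kI) < sin)
    (μ : ℝ → ℝ)
    (hμ : ∀ s : ℝ, μ s = μbar * s / (kS + s + s ^ 2 / kI))
    -- s^◇ is the maximizer of φ(s) = (α/k)μ(s)(s_in − s) on [0, s_in], with s^◇ < s̄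
    (hsdia1 : 0 < sdia) (hsdia2 : sdia < Real.sqrt (kS * kI))
    (hsdiamax : ∀ s ∈ Set.Icc (0 : ℝ) sin,
      α / k * μ s * (sin - s) ≤ α / k * μ sdia * (sin - sdia))
    -- bounds of the region: 0 < ȳ_i < ō_i < φ(s^◇)
    (hylo : 0 < ylo) (hlohi : ylo < yhi)
    (hyhi : yhi < α / k * μ sdia * (sin - sdia))
    -- s_c(ō_i) and s_d(ȳ_i): roots of φ(s) = ō_i and φ(s) = ȳ_i
    (hsc1 : 0 < sc) (hsc2 : sc < sdia) (hsc : α / k * μ sc * (sin - sc) = yhi)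
    (hsd1 : sdia < sd) (hsd2 : sd < sin) (hsd : α / k * μ sd * (sin - sd) = ylo)
    -- μ increasing on [0, s̄], decreasing on [s̄, ∞)
    (hmono : StrictMonoOn μ (Set.Icc 0 (Real.sqrt (kS * kI))))
    (hanti : StrictAntiOn μ (Set.Ici (Real.sqrt (kS * kI))))
    -- s_a(D) < s̄ < s_b(D): the roots of μ(s) = D
    (hsa1 : 0 < sa) (hsa2 : sa < Real.sqrt (kS * kI)) (hra : μ sa = D)
    (hsb1 : Real.sqrt (kS * kI) < sb) (hrb : μ sb = D)
    -- D in the admissible interval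
    (hD1 : μ sc < D) (hD2 : D < min (μ sdia) (μ sd)) :
    α * D / k * (sin - sb) < ylo ∧ α * D / k * (sin - sa) > yhi :=
  admissible_dilution_general μbar kS kI α k sin D ylo yhi sdia sc sd sa sb hμbar hkS hkI hα hk
    hsbar μ hμ hsdia1 hsdia2 hsdiamax hsc1 hsc2 hsc hsd1 hsd2 hsd hmono hanti hsa1 hsa2 hra hsb1 hrb
    hD1 hD2
end
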